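/- arXiv:1208.6063 — 3 statements merged into one kernel-verified Lean document; each statement's English description precedes it below -/
import Mathlib

section
/- If F'(0) > 1, where F(Ψ) = ⟨k^α⟩ − Σ_k k^α P(k) exp(−λ k^{1+β} Ψ / ⟨k^{1+β}⟩), i.e., if λ ⟨k^{α+β+1}⟩/⟨k^{1+β}⟩ > 1, then the fixed-point equation Ψ = F(Ψ) has a strictly positive solution Ψ* ∈ (0, ⟨k^α⟩]. -/
lemma exp_neg_le_quad {x : ℝ} (hx : 0 ≤ x) : Real.exp (-x) ≤ 1 - x + x ^ 2 := by
  have hmul : Real.exp (-x) * Real.exp x = 1 := by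
    rw [← Real.exp_add]; simp
  have h1 : x + 1 ≤ Real.exp x := Real.add_one_le_exp x
  have h2 : (0 : ℝ) < Real.exp (-x) := Real.exp_pos _
  nlinarith [sq_nonneg x, mul_nonneg h2.le hx]

/-- If λ⟨k^{α+β+1}⟩/⟨k^{1+β}⟩ > 1 (i.e. F'(0) > 1), then the fixed-point equation
Ψ = F(Ψ) = ⟨k^α⟩ − Σ_k k^α P(k) exp(−λ k^{1+β} Ψ/⟨k^{1+β}⟩) has a strictly positive
solution Ψ* ∈ (0, ⟨k^α⟩]. -/
theorem stmt_4 (s : Finset ℕ) (P : ℕ → ℝ) (α β lam : ℝ)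
    (hP : ∀ k, 0 ≤ P k) (hsupp : ∀ k, P k ≠ 0 → k ∈ s ∧ 1 ≤ k)
    (hprob : ∑ k ∈ s, P k = 1) (hlam : 0 < lam) (hα : 0 < α)
    (hmom : 0 < ∑ k ∈ s, (k : ℝ) ^ (1 + β) * P k)
    (hcond : 1 < lam * (∑ k ∈ s, (k : ℝ) ^ (α + β + 1) * P k) /
      (∑ k ∈ s, (k : ℝ) ^ (1 + β) * P k)) :
    ∃ Ψ : ℝ, 0 < Ψ ∧ Ψ ≤ (∑ k ∈ s, (k : ℝ) ^ α * P k) ∧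
      Ψ = (∑ k ∈ s, (k : ℝ) ^ α * P k) - ∑ k ∈ s, (k : ℝ) ^ α * P k *
        Real.exp (-(lam * (k : ℝ) ^ (1 + β) / (∑ j ∈ s, (j : ℝ) ^ (1 + β) * P j)) * Ψ) := by
  set w : ℝ := ∑ j ∈ s, (j : ℝ) ^ (1 + β) * P j with hw
  set M : ℝ := ∑ k ∈ s, (k : ℝ) ^ α * P k with hM
  set c : ℕ → ℝ := fun k => lam * (k : ℝ) ^ (1 + β) / w with hc
  have hcnn : ∀ k : ℕ, 0 ≤ c k := by
    intro k
    exact div_nonneg (mul_nonneg hlam.le (Real.rpow_nonneg (Nat.cast_nonneg k) _)) hmom.le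
  have htnn : ∀ k : ℕ, 0 ≤ (k : ℝ) ^ α * P k := by
    intro k
    exact mul_nonneg (Real.rpow_nonneg (Nat.cast_nonneg k) _) (hP k)
  set A : ℝ := ∑ k ∈ s, (k : ℝ) ^ α * P k * c k with hA
  set B : ℝ := ∑ k ∈ s, (k : ℝ) ^ α * P k * (c k) ^ 2 with hB
  have hBnn : 0 ≤ B := Finset.sum_nonneg fun k _ => mul_nonneg (htnn k) (sq_nonneg _)
  have hA1 : 1 < A := by
    have hAeq : A = lam * (∑ k ∈ s, (k : ℝ) ^ (α + β + 1) * P k) / w := by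
      rw [hA, Finset.mul_sum, Finset.sum_div]
      apply Finset.sum_congr rfl
      intro k _
      by_cases hPk : P k = 0
      · simp [hPk, hc]
      · have hk1 : (1 : ℝ) ≤ (k : ℝ) := by exact_mod_cast (hsupp k hPk).2
        have hkpos : (0 : ℝ) < (k : ℝ) := lt_of_lt_of_le one_pos hk1
        have : (k : ℝ) ^ (α + β + 1) = (k : ℝ) ^ α * (k : ℝ) ^ (1 + β) := by
          rw [← Real.rpow_add hkpos]; ring_nf
        rw [this, hc]; ring
    rw [hAeq]; exact hcond
  -- the fixed-point function
  set g : ℝ → ℝ := fun Ψ =>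
    M - (∑ k ∈ s, (k : ℝ) ^ α * P k * Real.exp (-(c k) * Ψ)) - Ψ with hg
  have hgcont : Continuous g := by
    apply Continuous.sub _ continuous_id
    apply Continuous.sub continuous_const
    apply continuous_finset_sum
    intro k _
    exact continuous_const.mul (Real.continuous_exp.comp (continuous_const.mul continuous_id))
  have hMpos : 0 < M := by
    obtain ⟨k, hks, hkpos⟩ : ∃ k ∈ s, 0 < (k : ℝ) ^ (1 + β) * P k := by
      by_contra h
      push_neg at h
      have : (∑ k ∈ s, (k : ℝ) ^ (1 + β) * P k) ≤ 0 := Finset.sum_nonpos h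
      linarith
    have hPk : P k ≠ 0 := by
      intro h0; rw [h0, mul_zero] at hkpos; exact lt_irrefl _ hkpos
    have hk1 : (1 : ℝ) ≤ (k : ℝ) := by exact_mod_cast (hsupp k hPk).2
    apply Finset.sum_pos' (fun k _ => htnn k)
    refine ⟨k, hks, mul_pos (Real.rpow_pos_of_pos (lt_of_lt_of_le one_pos hk1) _) ?_⟩
    exact lt_of_le_of_ne (hP k) (Ne.symm hPk)
  -- g M ≤ 0
  have hgM : g M ≤ 0 := by
    have : 0 ≤ ∑ k ∈ s, (k : ℝ) ^ α * P k * Real.exp (-(c k) * M) :=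
      Finset.sum_nonneg fun k _ => mul_nonneg (htnn k) (Real.exp_pos _).le
    simp only [hg]; linarith
  -- lower bound for g
  have hlow : ∀ Ψ : ℝ, 0 ≤ Ψ → (A - 1) * Ψ - B * Ψ ^ 2 ≤ g Ψ := by
    intro Ψ hΨ
    have hsum : ∑ k ∈ s, (k : ℝ) ^ α * P k * Real.exp (-(c k) * Ψ) ≤
        ∑ k ∈ s, (k : ℝ) ^ α * P k * (1 - c k * Ψ + (c k * Ψ) ^ 2) := by
      apply Finset.sum_le_sum
      intro k _
      apply mul_le_mul_of_nonneg_left _ (htnn k)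
      have := exp_neg_le_quad (mul_nonneg (hcnn k) hΨ)
      rw [neg_mul]
      exact this
    have heq : ∑ k ∈ s, (k : ℝ) ^ α * P k * (1 - c k * Ψ + (c k * Ψ) ^ 2) =
        M - A * Ψ + B * Ψ ^ 2 := by
      rw [hM, hA, hB, Finset.sum_mul, Finset.sum_mul, ← Finset.sum_sub_distrib,
        ← Finset.sum_add_distrib]
      apply Finset.sum_congr rfl
      intro k _; ring
    rw [heq] at hsum
    simp only [hg]
    nlinarith
  -- choose a small positive point where g is positive
  set ε : ℝ := min ((A - 1) / (2 * (B + 1))) M with hε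
  have hεpos : 0 < ε := lt_min (div_pos (by linarith) (by linarith)) hMpos
  have hεM : ε ≤ M := min_le_right _ _
  have hεsmall : ε ≤ (A - 1) / (2 * (B + 1)) := min_le_left _ _
  have hgε : 0 < g ε := by
    have h1 := hlow ε hεpos.le
    have h2 : (B + 1) * ε ≤ (A - 1) / 2 := by
      rw [le_div_iff₀ (by linarith : (0:ℝ) < 2 * (B + 1))] at hεsmall
      nlinarith
    nlinarith [sq_nonneg ε, mul_pos hεpos hεpos]
  -- intermediate value theorem
  have hivt := intermediate_value_Icc' hεM hgcont.continuousOn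
  have h0mem : (0 : ℝ) ∈ Set.Icc (g M) (g ε) := ⟨hgM, hgε.le⟩
  obtain ⟨Ψ, hΨmem, hΨ0⟩ := hivt h0mem
  refine ⟨Ψ, lt_of_lt_of_le hεpos hΨmem.1, hΨmem.2, ?_⟩
  have : M - (∑ k ∈ s, (k : ℝ) ^ α * P k * Real.exp (-(c k) * Ψ)) - Ψ = 0 := hΨ0
  have hΨeq : Ψ = M - ∑ k ∈ s, (k : ℝ) ^ α * P k * Real.exp (-(c k) * Ψ) := by linarith
  convert hΨeq using 3
end

section
/- Conversely, if λ ⟨k^{α+β+1}⟩/⟨k^{1+β}⟩ ≤ 1, then Ψ = 0 is the unique nonnegative solution of Ψ = ⟨k^α⟩ − Σ_k k^α P(k) exp(−λ k^{1+β} Ψ / ⟨k^{1+β}⟩). -/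
/-- If λ⟨k^{α+β+1}⟩/⟨k^{1+β}⟩ ≤ 1, then Ψ = 0 is the unique nonnegative solution of
Ψ = ⟨k^α⟩ − Σ_k k^α P(k) exp(−λ k^{1+β} Ψ/⟨k^{1+β}⟩). -/
theorem stmt_5 (s : Finset ℕ) (P : ℕ → ℝ) (α β lam : ℝ)
    (hP : ∀ k, 0 ≤ P k) (hsupp : ∀ k, P k ≠ 0 → k ∈ s ∧ 1 ≤ k)
    (hprob : ∑ k ∈ s, P k = 1) (hlam : 0 < lam) (hα : 0 < α)
    (hmom : 0 < ∑ k ∈ s, (k : ℝ) ^ (1 + β) * P k)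
    (hcond : lam * (∑ k ∈ s, (k : ℝ) ^ (α + β + 1) * P k) /
      (∑ k ∈ s, (k : ℝ) ^ (1 + β) * P k) ≤ 1) :
    ∀ Ψ : ℝ, 0 ≤ Ψ →
      Ψ = (∑ k ∈ s, (k : ℝ) ^ α * P k) - ∑ k ∈ s, (k : ℝ) ^ α * P k *
        Real.exp (-(lam * (k : ℝ) ^ (1 + β) / (∑ j ∈ s, (j : ℝ) ^ (1 + β) * P j)) * Ψ) →
      Ψ = 0 := by
  intro Ψ hΨ heq
  by_contra hne
  have hΨpos : 0 < Ψ := lt_of_le_of_ne hΨ (Ne.symm hne)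
  set M := ∑ j ∈ s, (j : ℝ) ^ (1 + β) * P j with hM
  have key : Ψ = ∑ k ∈ s, (k : ℝ) ^ α * P k *
      (1 - Real.exp (-(lam * (k : ℝ) ^ (1 + β) / M) * Ψ)) := by
    conv_lhs => rw [heq]
    rw [← Finset.sum_sub_distrib]
    exact Finset.sum_congr rfl fun k _ => by ring
  obtain ⟨k0, hk0s, hk0⟩ : ∃ k ∈ s, P k ≠ 0 := by
    by_contra h
    push_neg at h
    rw [Finset.sum_eq_zero h] at hprob
    norm_num at hprob
  have hterm : ∀ k, P k ≠ 0 → (k : ℝ) ^ α * P k *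
      (1 - Real.exp (-(lam * (k : ℝ) ^ (1 + β) / M) * Ψ))
      < (k : ℝ) ^ α * P k * ((lam * (k : ℝ) ^ (1 + β) / M) * Ψ) := by
    intro k hk
    obtain ⟨_, hk1⟩ := hsupp k hk
    have hkpos : (0 : ℝ) < k := by exact_mod_cast hk1
    have hc : 0 < lam * (k : ℝ) ^ (1 + β) / M :=
      div_pos (mul_pos hlam (Real.rpow_pos_of_pos hkpos _)) hmom
    have hx : 0 < (lam * (k : ℝ) ^ (1 + β) / M) * Ψ := mul_pos hc hΨpos
    have hexp : -((lam * (k : ℝ) ^ (1 + β) / M) * Ψ) + 1 <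
        Real.exp (-((lam * (k : ℝ) ^ (1 + β) / M) * Ψ)) :=
      Real.add_one_lt_exp (by linarith)
    have hfac : 0 < (k : ℝ) ^ α * P k :=
      mul_pos (Real.rpow_pos_of_pos hkpos _) (lt_of_le_of_ne (hP k) (Ne.symm hk))
    have : 1 - Real.exp (-(lam * (k : ℝ) ^ (1 + β) / M) * Ψ)
        < (lam * (k : ℝ) ^ (1 + β) / M) * Ψ := by
      rw [neg_mul]
      linarith
    exact (mul_lt_mul_iff_right₀ hfac).mpr this
  have hlt : ∑ k ∈ s, (k : ℝ) ^ α * P k *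
      (1 - Real.exp (-(lam * (k : ℝ) ^ (1 + β) / M) * Ψ))
      < ∑ k ∈ s, (k : ℝ) ^ α * P k * ((lam * (k : ℝ) ^ (1 + β) / M) * Ψ) := by
    apply Finset.sum_lt_sum
    · intro k _
      rcases eq_or_ne (P k) 0 with h0 | h0
      · simp [h0]
      · exact (hterm k h0).le
    · exact ⟨k0, hk0s, hterm k0 hk0⟩
  have hsum_eq : ∑ k ∈ s, (k : ℝ) ^ α * P k * ((lam * (k : ℝ) ^ (1 + β) / M) * Ψ)
      = (lam * (∑ k ∈ s, (k : ℝ) ^ (α + β + 1) * P k) / M) * Ψ := by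
    rw [Finset.mul_sum, Finset.sum_div, Finset.sum_mul]
    apply Finset.sum_congr rfl
    intro k _
    rcases eq_or_ne (P k) 0 with h0 | h0
    · simp [h0]
    · obtain ⟨_, hk1⟩ := hsupp k h0
      have hkpos : (0 : ℝ) < k := by exact_mod_cast hk1
      have : (k : ℝ) ^ (α + β + 1) = (k : ℝ) ^ α * (k : ℝ) ^ (1 + β) := by
        rw [← Real.rpow_add hkpos]
        ring_nf
      rw [this]
      ring
  rw [hsum_eq] at hlt
  have hfin : (lam * (∑ k ∈ s, (k : ℝ) ^ (α + β + 1) * P k) / M) * Ψ ≤ 1 * Ψ :=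
    mul_le_mul_of_nonneg_right hcond hΨ
  rw [← key] at hlt
  linarith
end

section
/- In the modified model with α + β + 2 > γ and β + 2 < γ, the threshold λ_c^#(k_max) = (∫_{k_min}^{k_max} k^{β+1−γ} dk)/(∫_{k_min}^{k_max} k^{α+β+1−γ} dk) tends to 0 as k_max → ∞; more precisely it is asymptotic to k_min^{−α}·((α+β+2−γ)/(γ−β−2))·(k_max/k_min)^{γ−α−β−2}. -/
/-!
With p = β + 2 - γ < 0 and q = α + β + 2 - γ > 0, both integrals are explicit: the numerator
converges to k_min^p / (-p) while the denominator is asymptotic to k_max^q / q. Hence the ratio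
is asymptotic to k_min^p · (q / -p) · k_max^(-q), which is the stated expression and tends to 0.
-/

open intervalIntegral Filter Asymptotics Topology

variable {a r : ℝ}

theorem integral_rpow_eventuallyEq (ha : 0 < a) (hr : r ≠ -1) :
    (fun x : ℝ => ∫ k in a..x, k ^ r) =ᶠ[atTop]
      fun x => (x ^ (r + 1) - a ^ (r + 1)) / (r + 1) := by
  filter_upwards [eventually_gt_atTop 0] with x hx
  exact integral_rpow (Or.inr ⟨hr, Set.notMem_uIcc_of_lt ha hx⟩)

theorem tendsto_integral_rpow_of_lt_neg_one (ha : 0 < a) (hr : r < -1) :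
    Tendsto (fun x : ℝ => ∫ k in a..x, k ^ r) atTop (𝓝 (-a ^ (r + 1) / (r + 1))) := by
  refine Tendsto.congr' (integral_rpow_eventuallyEq ha hr.ne).symm ?_
  have hpow : Tendsto (fun x : ℝ => x ^ (r + 1)) atTop (𝓝 0) := by
    simpa only [neg_neg] using tendsto_rpow_neg_atTop (y := -(r + 1)) (by linarith)
  simpa only [zero_sub] using (hpow.sub_const (a ^ (r + 1))).div_const (r + 1)

theorem integral_rpow_isEquivalent_of_neg_one_lt (ha : 0 < a) (hr : -1 < r) :
    (fun x : ℝ => ∫ k in a..x, k ^ r) ~[atTop] fun x => x ^ (r + 1) / (r + 1) := by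
  refine IsEquivalent.congr_left ?_ (integral_rpow_eventuallyEq ha hr.ne').symm
  have hr1 : 0 < r + 1 := by linarith
  have hinf : Tendsto (fun x : ℝ => x ^ (r + 1) / (r + 1)) atTop atTop :=
    (tendsto_rpow_atTop hr1).atTop_div_const hr1
  exact (IsEquivalent.refl.add_const_of_norm_tendsto_atTop (c := -(a ^ (r + 1) / (r + 1)))
    (tendsto_norm_atTop_atTop.comp hinf)).congr_left (.of_forall fun x => by ring)

theorem integral_rpow_div_integral_rpow_isEquivalent {s : ℝ} (ha : 0 < a) (hr : r < -1)
    (hs : -1 < s) :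
    (fun x : ℝ => (∫ k in a..x, k ^ r) / ∫ k in a..x, k ^ s) ~[atTop]
      fun x => (-a ^ (r + 1) / (r + 1)) / (x ^ (s + 1) / (s + 1)) := by
  have hc : -a ^ (r + 1) / (r + 1) ≠ 0 :=
    div_ne_zero (neg_ne_zero.2 (Real.rpow_pos_of_pos ha _).ne') (by linarith)
  exact ((isEquivalent_const_iff_tendsto hc).2 (tendsto_integral_rpow_of_lt_neg_one ha hr)).div
    (integral_rpow_isEquivalent_of_neg_one_lt ha hs)

theorem neg_rpow_div_div_rpow_div {p q x : ℝ} (ha : 0 < a) (hx : 0 < x) (hp : p ≠ 0) :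
    -a ^ p / p / (x ^ q / q) = a ^ (p - q) * (q / -p) * (x / a) ^ (-q) := by
  rw [Real.rpow_sub ha, Real.rpow_neg (div_pos hx ha).le, Real.div_rpow hx.le ha.le, inv_div]
  have : 0 < a ^ q := by positivity
  have : 0 < x ^ q := by positivity
  field_simp

theorem stmt_8_general (kmin γ α β : ℝ) (hkmin : 0 < kmin)
    (hβγ : β + 2 < γ) (hcond : γ < α + β + 2) :
    Tendsto (fun kmax : ℝ =>
        (∫ k in kmin..kmax, k ^ (β + 1 - γ)) / (∫ k in kmin..kmax, k ^ (α + β + 1 - γ)))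
      atTop (nhds 0) ∧
    Tendsto (fun kmax : ℝ =>
        ((∫ k in kmin..kmax, k ^ (β + 1 - γ)) / (∫ k in kmin..kmax, k ^ (α + β + 1 - γ))) /
          (kmin ^ (-α) * ((α + β + 2 - γ) / (γ - β - 2)) * (kmax / kmin) ^ (γ - α - β - 2)))
      atTop (nhds 1) := by
  have hq0 : 0 < α + β + 2 - γ := by linarith
  have hequiv := integral_rpow_div_integral_rpow_isEquivalent hkmin
    (show β + 1 - γ < -1 by linarith) (show -1 < α + β + 1 - γ by linarith)
  rw [show β + 1 - γ + 1 = β + 2 - γ by ring, show α + β + 1 - γ + 1 = α + β + 2 - γ by ring]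
    at hequiv
  have hlim : Tendsto (fun x : ℝ => -kmin ^ (β + 2 - γ) / (β + 2 - γ) /
      (x ^ (α + β + 2 - γ) / (α + β + 2 - γ))) atTop (nhds 0) :=
    tendsto_const_nhds.div_atTop ((tendsto_rpow_atTop hq0).atTop_div_const hq0)
  have htarget : (fun x : ℝ => -kmin ^ (β + 2 - γ) / (β + 2 - γ) /
      (x ^ (α + β + 2 - γ) / (α + β + 2 - γ))) =ᶠ[atTop]
      fun x => kmin ^ (-α) * ((α + β + 2 - γ) / (γ - β - 2)) * (x / kmin) ^ (γ - α - β - 2) := by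
    filter_upwards [eventually_gt_atTop 0] with x hx
    rw [neg_rpow_div_div_rpow_div hkmin hx (by linarith)]
    congr 3 <;> ring
  refine ⟨hequiv.symm.tendsto_nhds hlim, ?_⟩
  refine (isEquivalent_iff_tendsto_one ?_).1 (hequiv.congr_right htarget)
  filter_upwards [eventually_gt_atTop 0] with x hx
  have : 0 < (α + β + 2 - γ) / (γ - β - 2) := div_pos hq0 (by linarith)
  positivity

/-- If β + 2 < γ < α + β + 2 then λ_c^#(k_max) → 0 as k_max → ∞; more precisely it
is asymptotic to k_min^{−α}·((α+β+2−γ)/(γ−β−2))·(k_max/k_min)^{γ−α−β−2}. -/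
theorem stmt_8 (kmin γ α β : ℝ) (hkmin : 0 < kmin) (hγ2 : 2 < γ)
    (hα0 : 0 < α) (hα1 : α ≤ 1) (hβγ : β + 2 < γ) (hcond : γ < α + β + 2) :
    Tendsto (fun kmax : ℝ =>
        (∫ k in kmin..kmax, k ^ (β + 1 - γ)) / (∫ k in kmin..kmax, k ^ (α + β + 1 - γ)))
      atTop (nhds 0) ∧
    Tendsto (fun kmax : ℝ =>
        ((∫ k in kmin..kmax, k ^ (β + 1 - γ)) / (∫ k in kmin..kmax, k ^ (α + β + 1 - γ))) /
          (kmin ^ (-α) * ((α + β + 2 - γ) / (γ - β - 2)) * (kmax / kmin) ^ (γ - α - β - 2)))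
      atTop (nhds 1) :=
  stmt_8_general kmin γ α β hkmin hβγ hcond
end
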